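/- The generator of dissipative particle dynamics in dimension three annihilates each component of the total angular momentum: with potential U(q) = Σ_{i<j} φ(|q_i − q_j|) for a differentiable φ : (0,∞) → ℝ and conservative forces F_i = −∇_{q_i}U, for every fixed c ∈ ℝ³ the observable g(q,p) = c·Σ_k (q_k × p_k) satisfies, at every phase point (q,p) with pairwise distinct positions, Σ_i (p_i/m_i)·∇_{q_i} g + Σ_i F_i·∇_{p_i} g + Σ_{i<j} [ −γ ω_D(r_ij)(e_ij·v_ij) (D_{ij} g) + (σ²/2) ω_R(r_ij)² (D_{ij}² g) ] = 0. -/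

import Mathlib

open scoped RealInnerProductSpace BigOperators

noncomputable section

/-- Cross product on `EuclideanSpace ℝ (Fin 3)`. -/
def cross3 (x y : EuclideanSpace ℝ (Fin 3)) : EuclideanSpace ℝ (Fin 3) :=
  (WithLp.equiv 2 (Fin 3 → ℝ)).symm
    (crossProduct ((WithLp.equiv 2 (Fin 3 → ℝ)) x) ((WithLp.equiv 2 (Fin 3 → ℝ)) y))

/-- Unit separation vector `e_ij = (q_i − q_j)/|q_i − q_j|`. -/
def unitSep {N : ℕ} (q : Fin N → EuclideanSpace ℝ (Fin 3)) (i j : Fin N) :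
    EuclideanSpace ℝ (Fin 3) :=
  ‖q i - q j‖⁻¹ • (q i - q j)

/-- Pair direction in momentum space: `e_ij` in the `i`-th slot, `−e_ij` in the `j`-th slot,
`0` elsewhere. -/
def pairDir {N : ℕ} (q : Fin N → EuclideanSpace ℝ (Fin 3)) (i j : Fin N) :
    Fin N → EuclideanSpace ℝ (Fin 3) :=
  Pi.single i (unitSep q i j) - Pi.single j (unitSep q i j)

/-- Relative velocity `v_ij = p_i/m_i − p_j/m_j`. -/
def relVel {N : ℕ} (m : Fin N → ℝ) (p : Fin N → EuclideanSpace ℝ (Fin 3)) (i j : Fin N) :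
    EuclideanSpace ℝ (Fin 3) :=
  (m i)⁻¹ • p i - (m j)⁻¹ • p j

/-!
The observable `g(q, p) = c · Σ_k q_k × p_k` is bilinear, so every derivative in the generator is
explicit. The free-streaming term is `c · (p_i/m_i × p_i) = 0`. The force term is the total torque,
which equals minus the derivative of `U` along the infinitesimal rotation `q_k ↦ c × q_k`; this
derivative vanishes because rotations preserve the distances `|q_i − q_j|`, i.e.
`(q_i − q_j) · (c × (q_i − q_j)) = 0`. In the dissipative and random terms the pair direction `e_ij`
is parallel to `q_i − q_j`, so `D_ij g = c · ((q_i − q_j) × e_ij) = 0` identically in `p`, and hence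
also `D_ij² g = 0`.
-/

open scoped Matrix

section CrossProduct

variable (x y z : EuclideanSpace ℝ (Fin 3))

lemma inner_cross3 : ⟪x, cross3 y z⟫ = x.ofLp ⬝ᵥ y.ofLp ⨯₃ z.ofLp := by
  simp [EuclideanSpace.inner_eq_star_dotProduct, cross3, dotProduct_comm]

lemma inner_cross3_rotate : ⟪x, cross3 y z⟫ = ⟪y, cross3 z x⟫ := by
  rw [inner_cross3, inner_cross3]; exact triple_product_permutation _ _ _

lemma inner_cross3_eq_cross3_inner : ⟪x, cross3 y z⟫ = ⟪cross3 x y, z⟫ := by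
  rw [inner_cross3_rotate, inner_cross3_rotate, real_inner_comm]

lemma inner_self_cross3 : ⟪x, cross3 x y⟫ = 0 := by
  rw [inner_cross3]; exact dot_self_cross _ _

lemma inner_cross3_self : ⟪y, cross3 x y⟫ = 0 := by
  rw [inner_cross3]; exact dot_cross_self _ _

lemma cross3_sub_right : cross3 x (y - z) = cross3 x y - cross3 x z := by
  simp [cross3]

lemma inner_sub_cross3_sub_cross3 : ⟪x - y, cross3 z x - cross3 z y⟫ = 0 := by
  rw [← cross3_sub_right, inner_cross3_self]

end CrossProduct

section Partials

variable {ι F : Type*} [Fintype ι] [NormedAddCommGroup F] [InnerProductSpace ℝ F]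

lemma sum_inner_pi_single [DecidableEq ι] (w : ι → F) (i : ι) (e : F) :
    ∑ k, ⟪w k, (Pi.single i e : ι → F) k⟫ = ⟪w i, e⟫ := by
  rw [Fintype.sum_eq_single i fun k hk => by rw [Pi.single_eq_of_ne hk, inner_zero_right],
    Pi.single_eq_same]

lemma lineDeriv_sum_inner (w x v : ι → F) :
    lineDeriv ℝ (fun x => ∑ k, ⟪w k, x k⟫) x v = ∑ k, ⟪w k, v k⟫ := by
  let L : (ι → F) →L[ℝ] ℝ := ∑ k, (innerSL ℝ (w k)).comp (ContinuousLinearMap.proj k)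
  have hL : HasFDerivAt (fun x => ∑ k, ⟪w k, x k⟫) L x := by
    convert L.hasFDerivAt using 1; ext; simp [L]
  simpa [L] using (hL.hasLineDerivAt v).lineDeriv

lemma sum_inner_gradient_update [DecidableEq ι] [CompleteSpace F] {U : (ι → F) → ℝ}
    {U' : (ι → F) →L[ℝ] ℝ} {q : ι → F} (hU : HasFDerivAt U U' q) (v : ι → F) :
    ∑ i, ⟪gradient (fun x => U (Function.update q i x)) (q i), v i⟫ = U' v := by
  have hpartial (i : ι) : HasGradientAt (fun x => U (Function.update q i x))
      ((InnerProductSpace.toDual ℝ F).symm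
        (U'.comp (.pi (Pi.single i (.id ℝ F))))) (q i) := by
    rw [hasGradientAt_iff_hasFDerivAt, LinearIsometryEquiv.apply_symm_apply]
    exact (Function.update_eq_self i q ▸ hU).comp (q i) (hasFDerivAt_update q (q i))
  simp only [fun i => (hpartial i).gradient, InnerProductSpace.toDual_symm_apply]
  conv_rhs => rw [← Finset.univ_sum_single v, map_sum]
  refine Finset.sum_congr rfl fun i _ => congrArg U' ?_
  ext j
  by_cases h : j = i <;> simp [h]

end Partials

section PairPotential

variable {ι F : Type*} [NormedAddCommGroup F] [InnerProductSpace ℝ F]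

lemma hasFDerivAt_norm_of_ne_zero {x : F} (hx : x ≠ 0) :
    HasFDerivAt (fun y : F => ‖y‖) (‖x‖⁻¹ • innerSL ℝ x) x := by
  have hx' : ‖x‖ ≠ 0 := norm_ne_zero_iff.2 hx
  have h := (hasStrictFDerivAt_norm_sq x).hasFDerivAt.sqrt (pow_ne_zero 2 hx')
  simp only [Real.sqrt_sq (norm_nonneg _)] at h
  convert h using 1
  ext y
  simp only [smul_apply, coe_innerSL_apply, smul_eq_mul, nsmul_eq_mul, Nat.cast_ofNat]
  field_simp

def pairFDeriv (φ : ℝ → ℝ) (q : ι → F) (a b : ι) : (ι → F) →L[ℝ] ℝ :=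
  (deriv φ ‖q a - q b‖ * ‖q a - q b‖⁻¹) •
    (innerSL ℝ (q a - q b)).comp
      (ContinuousLinearMap.proj (R := ℝ) (φ := fun _ : ι => F) a - ContinuousLinearMap.proj b)

lemma hasFDerivAt_comp_norm_sub [Fintype ι] {φ : ℝ → ℝ} {q : ι → F} {a b : ι}
    (hφ : DifferentiableAt ℝ φ ‖q a - q b‖) (hab : q a ≠ q b) :
    HasFDerivAt (fun q : ι → F => φ ‖q a - q b‖) (pairFDeriv φ q a b) q := by
  have hsub : HasFDerivAt (fun q : ι → F => q a - q b)
      (ContinuousLinearMap.proj (R := ℝ) (φ := fun _ : ι => F) a - ContinuousLinearMap.proj b) q :=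
    (hasFDerivAt_apply a q).fun_sub (hasFDerivAt_apply b q)
  have := hφ.hasDerivAt.comp_hasFDerivAt q
    ((hasFDerivAt_norm_of_ne_zero (sub_ne_zero.2 hab)).comp q hsub)
  rwa [ContinuousLinearMap.smul_comp, smul_smul] at this

lemma hasFDerivAt_pairPotential [Fintype ι] [LinearOrder ι] {φ : ℝ → ℝ}
    (hφ : DifferentiableOn ℝ φ (Set.Ioi 0)) {q : ι → F} (hq : Function.Injective q) :
    HasFDerivAt (fun q : ι → F => ∑ a, ∑ b, if a < b then φ ‖q a - q b‖ else 0)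
      (∑ a, ∑ b, if a < b then pairFDeriv φ q a b else 0) q := by
  refine HasFDerivAt.fun_sum fun a _ => HasFDerivAt.fun_sum fun b _ => ?_
  split_ifs with hab
  · have hne : q a ≠ q b := hq.ne hab.ne
    exact hasFDerivAt_comp_norm_sub
      (hφ.differentiableAt (Ioi_mem_nhds (norm_pos_iff.2 (sub_ne_zero.2 hne)))) hne
  · exact hasFDerivAt_const 0 q

lemma pairFDeriv_apply_eq_zero {φ : ℝ → ℝ} {q v : ι → F} {a b : ι}
    (hv : ⟪q a - q b, v a - v b⟫ = 0) : pairFDeriv φ q a b v = 0 := by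
  rw [pairFDeriv, smul_apply, ContinuousLinearMap.comp_apply]
  simp only [sub_apply, ContinuousLinearMap.proj_apply, innerSL_apply_apply, hv, smul_zero]

lemma sum_pairFDeriv_apply_eq_zero [LinearOrder ι] [Fintype ι] {φ : ℝ → ℝ} {q v : ι → F}
    (hv : ∀ a b, ⟪q a - q b, v a - v b⟫ = 0) :
    (∑ a, ∑ b, if a < b then pairFDeriv φ q a b else 0) v = 0 := by
  simp only [sum_apply]
  refine Finset.sum_eq_zero fun a _ => Finset.sum_eq_zero fun b _ => ?_
  split_ifs
  exacts [pairFDeriv_apply_eq_zero (hv a b), rfl]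

end PairPotential

section AngularMomentum

variable {ι : Type*} (c : EuclideanSpace ℝ (Fin 3))

lemma lineDeriv_angularMomentum_momentum [Fintype ι] (q p v : ι → EuclideanSpace ℝ (Fin 3)) :
    lineDeriv ℝ (fun p => ⟪c, ∑ k, cross3 (q k) (p k)⟫) p v = ∑ k, ⟪cross3 c (q k), v k⟫ := by
  simp only [inner_sum, inner_cross3_eq_cross3_inner]
  exact lineDeriv_sum_inner _ _ _

lemma lineDeriv_angularMomentum_position [Fintype ι] (q p v : ι → EuclideanSpace ℝ (Fin 3)) :
    lineDeriv ℝ (fun q => ⟪c, ∑ k, cross3 (q k) (p k)⟫) q v = ∑ k, ⟪cross3 (p k) c, v k⟫ := by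
  have h (x y : EuclideanSpace ℝ (Fin 3)) : ⟪c, cross3 x y⟫ = ⟪cross3 y c, x⟫ := by
    rw [inner_cross3_rotate, real_inner_comm]
  simp only [inner_sum, h]
  exact lineDeriv_sum_inner _ _ _

lemma sum_lineDeriv_angularMomentum_position_velocity [Fintype ι] [DecidableEq ι] (m : ι → ℝ)
    (q p : ι → EuclideanSpace ℝ (Fin 3)) :
    ∑ i, lineDeriv ℝ (fun q => ⟪c, ∑ k, cross3 (q k) (p k)⟫) q (Pi.single i ((m i)⁻¹ • p i))
      = 0 := by
  simp only [lineDeriv_angularMomentum_position, sum_inner_pi_single, inner_smul_right,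
    real_inner_comm (p _), inner_self_cross3, mul_zero, Finset.sum_const_zero]

lemma sum_lineDeriv_angularMomentum_momentum_neg_gradient [Fintype ι] [DecidableEq ι]
    {U : (ι → EuclideanSpace ℝ (Fin 3)) → ℝ} {U' : (ι → EuclideanSpace ℝ (Fin 3)) →L[ℝ] ℝ}
    {q : ι → EuclideanSpace ℝ (Fin 3)} (hU : HasFDerivAt U U' q)
    (p : ι → EuclideanSpace ℝ (Fin 3)) :
    ∑ i, lineDeriv ℝ (fun p => ⟪c, ∑ k, cross3 (q k) (p k)⟫) p
        (Pi.single i (-gradient (fun x => U (Function.update q i x)) (q i)))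
      = -U' fun k => cross3 c (q k) := by
  simp only [lineDeriv_angularMomentum_momentum, sum_inner_pi_single, inner_neg_right,
    Finset.sum_neg_distrib]
  simp only [real_inner_comm _ (cross3 c (q _)), sum_inner_gradient_update hU]

lemma lineDeriv_angularMomentum_pairDir {N : ℕ} (q p : Fin N → EuclideanSpace ℝ (Fin 3))
    (i j : Fin N) :
    lineDeriv ℝ (fun p => ⟪c, ∑ k, cross3 (q k) (p k)⟫) p (pairDir q i j) = 0 := by
  rw [lineDeriv_angularMomentum_momentum, pairDir]
  simp only [Pi.sub_apply, inner_sub_right, Finset.sum_sub_distrib, sum_inner_pi_single]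
  rw [← inner_sub_left, ← cross3_sub_right, unitSep, inner_smul_right, real_inner_comm,
    inner_cross3_self, mul_zero]

lemma lineDeriv_lineDeriv_angularMomentum_pairDir {N : ℕ}
    (q p : Fin N → EuclideanSpace ℝ (Fin 3)) (i j : Fin N) :
    lineDeriv ℝ (fun p => lineDeriv ℝ (fun p => ⟪c, ∑ k, cross3 (q k) (p k)⟫) p (pairDir q i j))
      p (pairDir q i j) = 0 := by
  simp only [lineDeriv_angularMomentum_pairDir]
  exact ((hasFDerivAt_const (0 : ℝ) p).hasLineDerivAt _).lineDeriv

end AngularMomentum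

theorem dpd_generator_annihilates_angular_momentum_general
    {N : ℕ}
    (m : Fin N → ℝ)
    (γ σ : ℝ)
    (ωD ωR : ℝ → ℝ)
    (φ : ℝ → ℝ) (hφ : DifferentiableOn ℝ φ (Set.Ioi 0))
    -- the potential `U(q) = Σ_{i<j} φ(|q_i − q_j|)`
    (U : (Fin N → EuclideanSpace ℝ (Fin 3)) → ℝ)
    (hU : U = fun q => ∑ i, ∑ j, if i < j then φ ‖q i - q j‖ else 0)
    -- the conservative forces `F_i = −∇_{q_i} U`
    (F : (Fin N → EuclideanSpace ℝ (Fin 3)) → Fin N → EuclideanSpace ℝ (Fin 3))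
    (hF : F = fun q i => -gradient (fun x => U (Function.update q i x)) (q i))
    (c : EuclideanSpace ℝ (Fin 3))
    -- the observable `g(q,p) = c·Σ_k (q_k × p_k)`
    (g : (Fin N → EuclideanSpace ℝ (Fin 3)) → (Fin N → EuclideanSpace ℝ (Fin 3)) → ℝ)
    (hg : g = fun q p => ⟪c, ∑ k, cross3 (q k) (p k)⟫)
    -- a phase point with pairwise distinct positions
    (q p : Fin N → EuclideanSpace ℝ (Fin 3))
    (hq : ∀ i j : Fin N, i ≠ j → q i ≠ q j) :
    -- `Σ_i (p_i/m_i)·∇_{q_i} g`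
    (∑ i, lineDeriv ℝ (fun q' => g q' p) q (Pi.single i ((m i)⁻¹ • p i)))
      -- `+ Σ_i F_i·∇_{p_i} g`
      + (∑ i, lineDeriv ℝ (fun p' => g q p') p (Pi.single i (F q i)))
      -- `+ Σ_{i<j} [ −γ ω_D(r_ij)(e_ij·v_ij) D_{ij} g + (σ²/2) ω_R(r_ij)² D_{ij}² g ]`
      + (∑ i, ∑ j, if i < j then
          -(γ * ωD ‖q i - q j‖) * ⟪unitSep q i j, relVel m p i j⟫ *
              lineDeriv ℝ (fun p' => g q p') p (pairDir q i j)
            + σ ^ 2 / 2 * ωR ‖q i - q j‖ ^ 2 *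
              lineDeriv ℝ (fun p' => lineDeriv ℝ (fun p'' => g q p'') p' (pairDir q i j))
                p (pairDir q i j)
          else 0)
      = 0 := by
  subst hF hg
  have hinj : Function.Injective q := fun i j h => by_contra fun hij => hq i j hij h
  have hU' := hU ▸ hasFDerivAt_pairPotential hφ hinj
  simp only [sum_lineDeriv_angularMomentum_position_velocity,
    sum_lineDeriv_angularMomentum_momentum_neg_gradient c hU',
    sum_pairFDeriv_apply_eq_zero fun a b => inner_sub_cross3_sub_cross3 (q a) (q b) c,
    lineDeriv_lineDeriv_angularMomentum_pairDir]
  simp [lineDeriv_angularMomentum_pairDir]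

/-- the generator of dissipative particle dynamics in dimension three
annihilates each component `c·Σ_k (q_k × p_k)` of the total angular momentum. -/
theorem dpd_generator_annihilates_angular_momentum
    {N : ℕ} (hN : 2 ≤ N)
    (m : Fin N → ℝ) (hm : ∀ k, 0 < m k)
    (γ σ : ℝ) (hγ : 0 < γ)
    (ωD ωR : ℝ → ℝ)
    (φ : ℝ → ℝ) (hφ : DifferentiableOn ℝ φ (Set.Ioi 0))
    -- the potential `U(q) = Σ_{i<j} φ(|q_i − q_j|)`
    (U : (Fin N → EuclideanSpace ℝ (Fin 3)) → ℝ)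
    (hU : U = fun q => ∑ i, ∑ j, if i < j then φ ‖q i - q j‖ else 0)
    -- the conservative forces `F_i = −∇_{q_i} U`
    (F : (Fin N → EuclideanSpace ℝ (Fin 3)) → Fin N → EuclideanSpace ℝ (Fin 3))
    (hF : F = fun q i => -gradient (fun x => U (Function.update q i x)) (q i))
    (c : EuclideanSpace ℝ (Fin 3))
    -- the observable `g(q,p) = c·Σ_k (q_k × p_k)`
    (g : (Fin N → EuclideanSpace ℝ (Fin 3)) → (Fin N → EuclideanSpace ℝ (Fin 3)) → ℝ)
    (hg : g = fun q p => ⟪c, ∑ k, cross3 (q k) (p k)⟫)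
    -- a phase point with pairwise distinct positions
    (q p : Fin N → EuclideanSpace ℝ (Fin 3))
    (hq : ∀ i j : Fin N, i ≠ j → q i ≠ q j) :
    -- `Σ_i (p_i/m_i)·∇_{q_i} g`
    (∑ i, lineDeriv ℝ (fun q' => g q' p) q (Pi.single i ((m i)⁻¹ • p i)))
      -- `+ Σ_i F_i·∇_{p_i} g`
      + (∑ i, lineDeriv ℝ (fun p' => g q p') p (Pi.single i (F q i)))
      -- `+ Σ_{i<j} [ −γ ω_D(r_ij)(e_ij·v_ij) D_{ij} g + (σ²/2) ω_R(r_ij)² D_{ij}² g ]`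
      + (∑ i, ∑ j, if i < j then
          -(γ * ωD ‖q i - q j‖) * ⟪unitSep q i j, relVel m p i j⟫ *
              lineDeriv ℝ (fun p' => g q p') p (pairDir q i j)
            + σ ^ 2 / 2 * ωR ‖q i - q j‖ ^ 2 *
              lineDeriv ℝ (fun p' => lineDeriv ℝ (fun p'' => g q p'') p' (pairDir q i j))
                p (pairDir q i j)
          else 0)
      = 0 :=
  dpd_generator_annihilates_angular_momentum_general m γ σ ωD ωR φ hφ U hU F hF c g hg q p hq
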